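/- Let M be a monoid and let A and B be disjoint M-acts. The disjoint union A ⊔ B is finitely presented if and only if both A and B are finitely presented. -/

import Mathlib

/-!
Presentations `⟨X | R⟩` of `A` and `⟨Y | S⟩` of `B` give the presentation `⟨X ⊔ Y | R ∪ S⟩` of
`A ⊔ B`: the kernel of the induced map never relates the two summands, and on each summand it is
the image of the congruence generated by `R` resp. `S`.

Conversely, in a finite presentation of `A ⊔ B` the generators split according to the summand
they are sent to, and every defining relation lies within one part. The relations inside the
`A`-part then present `A`, because the congruence generated by all relations, restricted to words
in `A`-generators, is generated by those relations alone.
-/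

/-- A right act of a monoid `M` on a type `A`. -/
structure RActOn (M : Type*) [Monoid M] (A : Type*) where
  act : A → M → A
  act_one : ∀ a, act a 1 = a
  act_mul : ∀ a m n, act a (m * n) = act (act a m) n

namespace RActOn

variable {M : Type*} [Monoid M]

/-- `f` is a homomorphism of `M`-acts. -/
def IsHom {A B : Type*} (α : RActOn M A) (β : RActOn M B) (f : A → B) : Prop :=
  ∀ a m, f (α.act a m) = β.act (f a) m

/-- The two acts are isomorphic. -/
def Isomorphic {A B : Type*} (α : RActOn M A) (β : RActOn M B) : Prop :=
  ∃ f : A → B, IsHom α β f ∧ Function.Bijective f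

/-- `ρ` is an `M`-act congruence on `A`. -/
def IsCong {A : Type*} (α : RActOn M A) (ρ : A → A → Prop) : Prop :=
  Equivalence ρ ∧ ∀ a b m, ρ a b → ρ (α.act a m) (α.act b m)

/-- The smallest congruence containing the relation `X`. -/
def congClosure {A : Type*} (α : RActOn M A) (X : A → A → Prop) : A → A → Prop :=
  fun a b => ∀ ρ : A → A → Prop, IsCong α ρ → (∀ x y, X x y → ρ x y) → ρ a b

/-- The free `M`-act on a set `X`: carrier `X × M`, action `(x, m) · n = (x, m * n)`. -/
def free (M : Type*) [Monoid M] (X : Type*) : RActOn M (X × M) where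
  act p n := (p.1, p.2 * n)
  act_one := by intro a; simp
  act_mul := by intro a m n; simp [mul_assoc]

/-- The `M`-act `α` is defined by the presentation `⟨X | R⟩`. -/
def DefinedBy {A : Type*} (α : RActOn M A) (X : Type*)
    (R : Set ((X × M) × (X × M))) : Prop :=
  ∃ f : X × M → A, Function.Surjective f ∧ IsHom (free M X) α f ∧
    ∀ u v : X × M, f u = f v ↔ congClosure (free M X) (fun a b => (a, b) ∈ R) u v

/-- The `M`-act `α` is finitely presented. -/
def FinitelyPresented {A : Type*} (α : RActOn M A) : Prop :=
  ∃ (X : Type) (_ : Finite X) (R : Set ((X × M) × (X × M))),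
    R.Finite ∧ DefinedBy α X R

/-- The `M`-act `α` is finitely generated. -/
def FinitelyGenerated {A : Type*} (α : RActOn M A) : Prop :=
  ∃ U : Set A, U.Finite ∧ ∀ a : A, ∃ u ∈ U, ∃ m : M, α.act u m = a

/-- `B` is a subact of `A`. -/
def IsSubact {A : Type*} (α : RActOn M A) (B : Set A) : Prop :=
  ∀ b ∈ B, ∀ m : M, α.act b m ∈ B

/-- The subset `S` is generated, as a subact, by `U ⊆ S`. -/
def FGSet {A : Type*} (α : RActOn M A) (S : Set A) : Prop :=
  ∃ U ⊆ S, U.Finite ∧ ∀ a ∈ S, ∃ u ∈ U, ∃ m : M, α.act u m = a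

/-- The act induced on a subact. -/
def subAct {A : Type*} (α : RActOn M A) (B : Set A) (hB : IsSubact α B) :
    RActOn M B where
  act b m := ⟨α.act b m, hB b b.2 m⟩
  act_one := by intro a; ext; simp [α.act_one]
  act_mul := by intro a m n; ext; simp [α.act_mul]

/-- The Rees congruence relation determined by `B`. -/
def reesRel {A : Type*} (B : Set A) : A → A → Prop :=
  fun a b => a = b ∨ (a ∈ B ∧ b ∈ B)

/-- The Rees quotient act `A / B`. -/
def reesAct {A : Type*} (α : RActOn M A) (B : Set A) (hB : IsSubact α B) :
    RActOn M (Quot (reesRel B)) where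
  act q m := Quot.lift (fun a => Quot.mk _ (α.act a m))
    (by
      intro a b h
      apply Quot.sound
      rcases h with h | ⟨ha, hb⟩
      · exact Or.inl (by rw [h])
      · exact Or.inr ⟨hB a ha m, hB b hb m⟩) q
  act_one := by
    intro q
    induction q using Quot.ind with
    | _ a => simp [α.act_one]
  act_mul := by
    intro q m n
    induction q using Quot.ind with
    | _ a => simp [α.act_mul]

/-- The trivial one-element `M`-act. -/
def trivAct (M : Type*) [Monoid M] : RActOn M PUnit where
  act _ _ := PUnit.unit
  act_one := by intro a; rfl
  act_mul := by intro a m n; rfl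

/-- The disjoint union of two `M`-acts. -/
def sumAct {A B : Type*} (α : RActOn M A) (β : RActOn M B) : RActOn M (A ⊕ B) where
  act x m := Sum.elim (fun a => Sum.inl (α.act a m)) (fun b => Sum.inr (β.act b m)) x
  act_one := by intro x; cases x <;> simp [α.act_one, β.act_one]
  act_mul := by intro x m n; cases x <;> simp [α.act_mul, β.act_mul]

/-- The `M`-act `M` itself, by right multiplication. -/
def selfAct (M : Type*) [Monoid M] : RActOn M M where
  act a m := a * m
  act_one := by intro a; simp
  act_mul := by intro a m n; simp [mul_assoc]

end RActOn

namespace RActOn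

variable {M : Type*} [Monoid M] {A B : Type*} {α : RActOn M A} {β : RActOn M B}

theorem congClosure_isCong (α : RActOn M A) (X : A → A → Prop) :
    IsCong α (congClosure α X) :=
  ⟨⟨fun a _ hρ _ => hρ.1.refl a,
    fun h ρ hρ hX => hρ.1.symm (h ρ hρ hX),
    fun h₁ h₂ ρ hρ hX => hρ.1.trans (h₁ ρ hρ hX) (h₂ ρ hρ hX)⟩,
   fun a b m h ρ hρ hX => hρ.2 a b m (h ρ hρ hX)⟩

theorem congClosure_of_rel {X : A → A → Prop} {a b : A} (h : X a b) : congClosure α X a b :=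
  fun _ _ hX => hX a b h

theorem congClosure_le {X ρ : A → A → Prop} (hρ : IsCong α ρ) (hX : ∀ a b, X a b → ρ a b)
    {a b : A} (h : congClosure α X a b) : ρ a b :=
  h ρ hρ hX

theorem IsCong.comap {ρ : B → B → Prop} (hρ : IsCong β ρ) {f : A → B} (hf : IsHom α β f) :
    IsCong α (fun a b => ρ (f a) (f b)) :=
  ⟨⟨fun _ => hρ.1.refl _, hρ.1.symm, hρ.1.trans⟩,
   fun a b m h => show ρ (f (α.act a m)) (f (α.act b m)) by rw [hf, hf]; exact hρ.2 _ _ m h⟩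

theorem isCong_ker {f : A → B} (hf : IsHom α β f) : IsCong α (fun a b => f a = f b) :=
  IsCong.comap (β := β) ⟨eq_equivalence, fun _ _ _ h => h ▸ rfl⟩ hf

theorem congClosure_map {f : A → B} (hf : IsHom α β f) {X : A → A → Prop} {Y : B → B → Prop}
    (hXY : ∀ a b, X a b → Y (f a) (f b)) {a b : A} (h : congClosure α X a b) :
    congClosure β Y (f a) (f b) :=
  congClosure_le ((congClosure_isCong β Y).comap hf)
    (fun _ _ hab => congClosure_of_rel (hXY _ _ hab)) h

theorem isHom_free_map {X Y : Type*} (j : X → Y) :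
    IsHom (free M X) (free M Y) (Prod.map j id) :=
  fun _ _ => rfl

theorem IsHom.apply_free {X : Type*} {f : X × M → A} (hf : IsHom (free M X) α f) (x : X) (m : M) :
    f (x, m) = α.act (f (x, 1)) m := by
  simpa [free] using hf (x, 1) m

theorem definedBy_of_kernel {X : Type*} {R : Set ((X × M) × (X × M))} {f : X × M → A}
    (hs : Function.Surjective f) (hf : IsHom (free M X) α f)
    (hR : ∀ u v, (u, v) ∈ R → f u = f v)
    (hker : ∀ u v, f u = f v → congClosure (free M X) (fun a b => (a, b) ∈ R) u v) :
    DefinedBy α X R :=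
  ⟨f, hs, hf, fun u v => ⟨hker u v, congClosure_le (isCong_ker hf) hR⟩⟩

theorem FinitelyPresented.of_isomorphic (h : FinitelyPresented α) (e : Isomorphic α β) :
    FinitelyPresented β := by
  obtain ⟨e, he, hbij⟩ := e
  obtain ⟨X, hX, R, hR, f, hs, hf, hfR⟩ := h
  refine ⟨X, hX, R, hR, e ∘ f, hbij.surjective.comp hs, fun u m => ?_, fun u v => ?_⟩
  · exact (congrArg e (hf u m)).trans (he _ _)
  · rw [← hfR u v]
    exact hbij.injective.eq_iff

theorem isomorphic_sumAct_swap (α : RActOn M A) (β : RActOn M B) :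
    Isomorphic (sumAct α β) (sumAct β α) :=
  ⟨Sum.swap, fun a _ => by cases a <;> rfl,
    Sum.swap_leftInverse.injective, Sum.swap_rightInverse.surjective⟩

theorem definedBy_sumAct {X Y : Type*} {R : Set ((X × M) × (X × M))}
    {S : Set ((Y × M) × (Y × M))} (hR : DefinedBy α X R) (hS : DefinedBy β Y S) :
    DefinedBy (sumAct α β) (X ⊕ Y)
      (Prod.map (Prod.map Sum.inl id) (Prod.map Sum.inl id) '' R ∪
        Prod.map (Prod.map Sum.inr id) (Prod.map Sum.inr id) '' S) := by
  obtain ⟨f, hfs, hf, hfR⟩ := hR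
  obtain ⟨g, hgs, hg, hgS⟩ := hS
  refine definedBy_of_kernel (f := Sum.map f g ∘ Equiv.sumProdDistrib X Y M)
    ((hfs.sumMap hgs).comp (Equiv.surjective _)) ?_ ?_ ?_
  · rintro ⟨x | y, m⟩ n
    · simp [free, sumAct, ← hf (x, m) n]
    · simp [free, sumAct, ← hg (y, m) n]
  · rintro _ _ (⟨⟨⟨x, m⟩, ⟨x', m'⟩⟩, huv, ⟨⟩⟩ | ⟨⟨⟨y, m⟩, ⟨y', m'⟩⟩, huv, ⟨⟩⟩)
    · simpa using (hfR _ _).2 (congClosure_of_rel huv)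
    · simpa using (hgS _ _).2 (congClosure_of_rel huv)
  · rintro ⟨x | y, m⟩ ⟨x' | y', m'⟩ h <;> simp only [Function.comp_apply,
      Equiv.sumProdDistrib_apply_left, Equiv.sumProdDistrib_apply_right, Sum.map_inl,
      Sum.map_inr, Sum.inl.injEq, Sum.inr.injEq, reduceCtorEq] at h
    · exact congClosure_map (isHom_free_map Sum.inl) (fun a b hab => Or.inl ⟨(a, b), hab, rfl⟩)
        ((hfR _ _).1 h)
    · exact congClosure_map (isHom_free_map Sum.inr) (fun a b hab => Or.inr ⟨(a, b), hab, rfl⟩)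
        ((hgS _ _).1 h)

-- Since `R` never relates the two parts, all pairs off the `p`-part may be lumped together.
theorem congClosure_restrict {X : Type*} (p : X → Prop) {R : Set ((X × M) × (X × M))}
    (hR : ∀ q ∈ R, (p q.1.1 ↔ p q.2.1)) {u v : {x // p x} × M}
    (h : congClosure (free M X) (fun a b => (a, b) ∈ R)
      (Prod.map Subtype.val id u) (Prod.map Subtype.val id v)) :
    congClosure (free M {x // p x})
      (fun a b => (Prod.map Subtype.val id a, Prod.map Subtype.val id b) ∈ R) u v := by
  set C := congClosure (free M {x // p x})
    (fun a b => (Prod.map Subtype.val id a, Prod.map Subtype.val id b) ∈ R)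
  have hC := congClosure_isCong (free M {x // p x})
    (fun a b => (Prod.map Subtype.val id a, Prod.map Subtype.val id b) ∈ R)
  let ρ : X × M → X × M → Prop := fun a b =>
    (∃ (ha : p a.1) (hb : p b.1), C (⟨a.1, ha⟩, a.2) (⟨b.1, hb⟩, b.2)) ∨ (¬ p a.1 ∧ ¬ p b.1)
  have hρ : IsCong (free M X) ρ := by
    refine ⟨⟨fun a => ?_, ?_, ?_⟩, ?_⟩
    · by_cases ha : p a.1
      · exact .inl ⟨ha, ha, hC.1.refl _⟩
      · exact .inr ⟨ha, ha⟩
    · rintro a b (⟨ha, hb, h⟩ | ⟨ha, hb⟩)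
      · exact .inl ⟨hb, ha, hC.1.symm h⟩
      · exact .inr ⟨hb, ha⟩
    · rintro a b c (⟨ha, hb, h⟩ | ⟨ha, hb⟩) (⟨hb', hc, h'⟩ | ⟨hb', hc⟩)
      · exact .inl ⟨ha, hc, hC.1.trans h h'⟩
      · exact absurd hb hb'
      · exact absurd hb' hb
      · exact .inr ⟨ha, hc⟩
    · rintro a b m (⟨ha, hb, h⟩ | ⟨ha, hb⟩)
      · exact .inl ⟨ha, hb, hC.2 _ _ m h⟩
      · exact .inr ⟨ha, hb⟩
  have hRρ : ∀ a b, (a, b) ∈ R → ρ a b := by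
    intro a b hab
    by_cases ha : p a.1
    · exact .inl ⟨ha, (hR _ hab).1 ha, congClosure_of_rel hab⟩
    · exact .inr ⟨ha, mt (hR _ hab).2 ha⟩
  obtain ⟨_, _, h⟩ | ⟨h, -⟩ := congClosure_le hρ hRρ h
  · exact h
  · exact absurd u.1.2 h

theorem FinitelyPresented.of_sumAct_left (h : FinitelyPresented (sumAct α β)) :
    FinitelyPresented α := by
  obtain ⟨X, _, R, hRfin, f, hfs, hf, hfR⟩ := h
  have hf_isLeft (x : X) (m : M) : (f (x, m)).isLeft = (f (x, 1)).isLeft := by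
    rw [hf.apply_free]; cases f (x, 1) <;> rfl
  have hfR' : ∀ q ∈ R, f q.1 = f q.2 := fun q hq => (hfR _ _).2 (congClosure_of_rel hq)
  let p : X → Prop := fun x => (f (x, 1)).isLeft
  let ι : {x // p x} × M → X × M := Prod.map Subtype.val id
  have hι : Function.Injective ι := Subtype.val_injective.prodMap Function.injective_id
  have hleft (u : {x // p x} × M) : (f (ι u)).isLeft := (hf_isLeft _ _).trans u.1.2
  let fA : {x // p x} × M → A := fun u => (f (ι u)).getLeft (hleft u)
  have hfA (u : {x // p x} × M) : f (ι u) = .inl (fA u) := (Sum.inl_getLeft _ _).symm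
  refine ⟨{x // p x}, inferInstance, Prod.map ι ι ⁻¹' R, hRfin.preimage (hι.prodMap hι).injOn,
    definedBy_of_kernel (f := fA) ?_ ?_ ?_ ?_⟩
  · intro a
    obtain ⟨w, hw⟩ := hfs (.inl a)
    have hp : p w.1 := by simp [p, ← hf_isLeft w.1 w.2, hw]
    exact ⟨(⟨w.1, hp⟩, w.2), Sum.inl_injective ((hfA _).symm.trans hw)⟩
  · intro u m
    apply Sum.inl_injective
    rw [← hfA, show ι ((free M _).act u m) = (free M X).act (ι u) m from rfl, hf, hfA]
    rfl
  · intro u v huv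
    exact Sum.inl_injective ((hfA u).symm.trans ((hfR' _ huv).trans (hfA v)))
  · intro u v huv
    refine congClosure_restrict p (fun q hq => ?_) ((hfR _ _).1 ?_)
    · simp only [p, ← hf_isLeft q.1.1 q.1.2, ← hf_isLeft q.2.1 q.2.2, hfR' q hq]
    · rw [hfA, hfA, huv]

end RActOn

open RActOn in
/-- The disjoint union of two `M`-acts is finitely presented iff both
components are finitely presented. -/
theorem disjoint_union_fp_iff {M : Type*} [Monoid M] {A B : Type*}
    (α : RActOn M A) (β : RActOn M B) :
    FinitelyPresented (sumAct α β) ↔ FinitelyPresented α ∧ FinitelyPresented β := by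
  refine ⟨fun h => ⟨h.of_sumAct_left,
    (h.of_isomorphic (isomorphic_sumAct_swap α β)).of_sumAct_left⟩, ?_⟩
  rintro ⟨⟨X, _, R, hR, hα⟩, ⟨Y, _, S, hS, hβ⟩⟩
  exact ⟨X ⊕ Y, inferInstance, _, (hR.image _).union (hS.image _), definedBy_sumAct hα hβ⟩
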